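/- arXiv:2602.16389 — 2 statements merged into one kernel-verified Lean document; each statement's English description precedes it below -/
import Mathlib

section
/- Let a finite group Γ act on an affine variety Z over a field, let Z//Γ be the categorical quotient (Spec of the invariant ring), and let γ : Z₁ → Z//Γ be a flat morphism of affine varieties. Then the projection to the second coordinate induces an isomorphism (Z ×_{Z//Γ} Z₁)//Γ ≅ Z₁; equivalently, the natural ring map O(Z₁) → (O(Z₁) ⊗_{O(Z)^Γ} O(Z))^Γ is an isomorphism. -/
/-!
STATEMENT 2: Let a finite group Γ act on an affine variety Z over a field, let Z//Γ be the
categorical quotient (Spec of the invariant ring), and let γ : Z₁ → Z//Γ be a flat morphism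
of affine varieties.  Then the projection to the second coordinate induces an isomorphism
(Z ×_{Z//Γ} Z₁)//Γ ≅ Z₁; equivalently, the natural ring map
O(Z₁) → (O(Z₁) ⊗_{O(Z)^Γ} O(Z))^Γ is an isomorphism.

Ring-theoretically (with A = O(Z), B = A^Γ = O(Z//Γ) the invariant subring, R = O(Z₁) a flat
B-algebra, Γ acting on R ⊗_B A through the second factor): the natural map
R → (R ⊗_B A)^Γ, r ↦ r ⊗ 1, is injective with image exactly the Γ-invariants.
-/

open scoped TensorProduct

variable (Γ : Type*) [Group Γ] (A : Type*) [CommRing A] [MulSemiringAction Γ A]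

/-- The subring of Γ-invariants `A^Γ = O(Z//Γ)`. -/
def fixedSubring : Subring A where
  carrier := {a | ∀ g : Γ, g • a = a}
  add_mem' := fun {a b} ha hb g => by rw [smul_add, ha g, hb g]
  zero_mem' := fun g => smul_zero g
  mul_mem' := fun {a b} ha hb g => by rw [smul_mul', ha g, hb g]
  one_mem' := fun g => smul_one g
  neg_mem' := fun {a} ha g => by rw [smul_neg, ha g]

/-- The action of `g ∈ Γ` on `A`, as a `B = A^Γ`-linear map. -/
def fixedActionHom (g : Γ) : A →ₗ[fixedSubring Γ A] A where
  toFun a := g • a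
  map_add' a b := smul_add g a b
  map_smul' b a := by
    simp [Subring.smul_def, smul_mul', b.2 g]

set_option maxHeartbeats 1000000 in
set_option synthInstance.maxHeartbeats 400000 in
theorem stmt2 (hΓ : Finite Γ)
    (R : Type*) [CommRing R] [Algebra (fixedSubring Γ A) R]
    (hflat : Module.Flat (fixedSubring Γ A) R) :
    Function.Injective (fun r : R => r ⊗ₜ[fixedSubring Γ A] (1 : A)) ∧
    Set.range (fun r : R => r ⊗ₜ[fixedSubring Γ A] (1 : A)) =
      {x : R ⊗[fixedSubring Γ A] A |
        ∀ g : Γ, LinearMap.lTensor R (fixedActionHom Γ A g) x = x} := by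
  have := Fintype.ofFinite Γ
  haveI := hflat
  classical
  let i : fixedSubring Γ A →ₗ[fixedSubring Γ A] A := Algebra.linearMap (fixedSubring Γ A) A
  let d : A →ₗ[fixedSubring Γ A] (Γ → A) :=
    LinearMap.pi (fun g => fixedActionHom Γ A g - LinearMap.id)
  have hiinj : Function.Injective i := fun x y h => Subtype.ext h
  have hexact : Function.Exact i d := by
    intro a
    constructor
    · intro h
      refine ⟨⟨a, fun g => ?_⟩, rfl⟩
      have hg := congrFun h g
      simpa [d, fixedActionHom, sub_eq_zero] using hg
    · rintro ⟨b, rfl⟩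
      funext g
      have hb : g • (b : A) = (b : A) := b.2 g
      show g • (b : A) - (b : A) = 0
      rw [hb, sub_self]
  have hTexact := Module.Flat.lTensor_exact R hexact
  have hTinj : Function.Injective (LinearMap.lTensor R i) :=
    Module.Flat.lTensor_preserves_injective_linearMap i hiinj
  have hφ : ∀ r : R, r ⊗ₜ[fixedSubring Γ A] (1 : A) =
      LinearMap.lTensor R i ((TensorProduct.rid (fixedSubring Γ A) R).symm r) := by
    intro r
    simp [TensorProduct.rid_symm_apply, LinearMap.lTensor_tmul, i]
  have hcomp : ∀ (x : R ⊗[fixedSubring Γ A] A) (g : Γ),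
      TensorProduct.piRightHom (fixedSubring Γ A) (fixedSubring Γ A) R (fun _ : Γ => A)
          (LinearMap.lTensor R d x) g =
        LinearMap.lTensor R (fixedActionHom Γ A g) x - x := by
    intro x g
    induction x using TensorProduct.induction_on with
    | zero => simp only [LinearMap.map_zero, Pi.zero_apply, sub_zero]
    | tmul r a =>
        simp [d, LinearMap.lTensor_tmul, TensorProduct.tmul_sub]
    | add x y hx hy =>
        simp only [map_add, Pi.add_apply, hx, hy]
        abel
  have hker : ∀ x : R ⊗[fixedSubring Γ A] A, LinearMap.lTensor R d x = 0 ↔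
      ∀ g : Γ, LinearMap.lTensor R (fixedActionHom Γ A g) x = x := by
    intro x
    constructor
    · intro h g
      have hc := hcomp x g
      rw [h, LinearMap.map_zero] at hc
      rw [Pi.zero_apply] at hc
      rw [eq_comm, sub_eq_zero] at hc
      exact hc
    · intro h
      have hpi : TensorProduct.piRightHom (fixedSubring Γ A) (fixedSubring Γ A) R (fun _ : Γ => A)
          (LinearMap.lTensor R d x) = 0 := by
        funext g
        rw [hcomp x g, h g, sub_self]
        rfl
      have hinjpi : Function.Injective
          (TensorProduct.piRightHom (fixedSubring Γ A) (fixedSubring Γ A) R (fun _ : Γ => A)) := by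
        intro u v huv
        have : TensorProduct.piRight (fixedSubring Γ A) (fixedSubring Γ A) R (fun _ : Γ => A) u =
            TensorProduct.piRight (fixedSubring Γ A) (fixedSubring Γ A) R (fun _ : Γ => A) v := by
          rw [TensorProduct.piRight_apply, TensorProduct.piRight_apply]; exact huv
        exact (TensorProduct.piRight (fixedSubring Γ A) (fixedSubring Γ A) R
          (fun _ : Γ => A)).injective this
      refine hinjpi ?_
      rw [hpi, LinearMap.map_zero]
  constructor
  · intro r s h
    simp only at h
    rw [hφ r, hφ s] at h
    exact (TensorProduct.rid (fixedSubring Γ A) R).symm.injective (hTinj h)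
  · ext x
    constructor
    · rintro ⟨r, rfl⟩
      simp only
      rw [Set.mem_setOf_eq, ← hker]
      rw [hφ r]
      exact (hTexact _).mpr ⟨(TensorProduct.rid (fixedSubring Γ A) R).symm r, rfl⟩
    · intro hx
      have h0 : LinearMap.lTensor R d x = 0 := (hker x).mpr hx
      obtain ⟨y, hy⟩ := (hTexact x).mp h0
      refine ⟨TensorProduct.rid (fixedSubring Γ A) R y, ?_⟩
      simp only [hφ]
      rw [LinearEquiv.symm_apply_apply, hy]
end

section
/- Let γ : Z₁ → Z₂ be a morphism of F-analytic manifolds over a non-Archimedean local field, with μᵢ nowhere-vanishing smooth measures on Zᵢ. Assume that for every nonnegative f ∈ C_c^∞(Z₁), the Radon–Nikodym derivative γ_*(f μ₁)/μ₂ belongs to L^p(Z₂) for all p < ∞. Then for any ε > 0 and any nonnegative g ∈ L^{1+ε}(Z₂), the pullback γ^*(g) = g ∘ γ belongs to L¹_loc(Z₁). -/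
/-!
Near any point of `Z₁` there is a compact open neighbourhood `V`, whose indicator is a smooth
compactly supported function. By hypothesis `γ_*(μ₁|_V) = h μ₂` with `h ∈ L^q` for the exponent
`q` conjugate to `1 + ε`, so `∫_V g ∘ γ dμ₁ = ∫ g h dμ₂ ≤ ‖g‖_{1+ε} ‖h‖_q < ∞` by Hölder.
-/

open MeasureTheory Set
open scoped ENNReal

section PullbackIntegrable

variable {α β : Type*} [MeasurableSpace α] [MeasurableSpace β] {μ : Measure α} {ν : Measure β}
  {γ : α → β} {h : β → ℝ≥0∞} {p q : ℝ}

theorem lintegral_comp_lt_top_of_map_eq_withDensity (hγ : AEMeasurable γ μ)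
    (hh : AEMeasurable h ν) (hmap : μ.map γ = ν.withDensity h) (hpq : p.HolderConjugate q)
    {g : β → ℝ≥0∞} (hg : AEMeasurable g ν) (hgp : ∫⁻ y, g y ^ p ∂ν < ∞)
    (hhq : ∫⁻ y, h y ^ q ∂ν < ∞) : ∫⁻ x, g (γ x) ∂μ < ∞ := by
  have hg' : AEMeasurable g (μ.map γ) :=
    hmap ▸ hg.mono_ac (withDensity_absolutelyContinuous ν h)
  calc ∫⁻ x, g (γ x) ∂μ = ∫⁻ y, (h * g) y ∂ν := by
        rw [← lintegral_map' hg' hγ, hmap, lintegral_withDensity_eq_lintegral_mul₀ hh hg]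
    _ ≤ (∫⁻ y, h y ^ q ∂ν) ^ (1 / q) * (∫⁻ y, g y ^ p ∂ν) ^ (1 / p) :=
        ENNReal.lintegral_mul_le_Lp_mul_Lq ν hpq.symm hh hg
    _ < ∞ := ENNReal.mul_lt_top
        (ENNReal.rpow_lt_top_of_nonneg hpq.symm.one_div_nonneg hhq.ne)
        (ENNReal.rpow_lt_top_of_nonneg hpq.one_div_nonneg hgp.ne)

theorem integrable_comp_of_map_eq_withDensity {E : Type*} [NormedAddCommGroup E]
    (hγ : AEMeasurable γ μ) (hh : AEMeasurable h ν) (hmap : μ.map γ = ν.withDensity h)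
    (hpq : p.HolderConjugate q) {g : β → E} (hg : MemLp g (ENNReal.ofReal p) ν)
    (hhq : ∫⁻ y, h y ^ q ∂ν < ∞) : Integrable (g ∘ γ) μ := by
  have hac : μ.map γ ≪ ν := hmap ▸ withDensity_absolutelyContinuous ν h
  have hgp : ∫⁻ y, ‖g y‖ₑ ^ p ∂ν < ∞ := by
    simpa [ENNReal.toReal_ofReal hpq.nonneg] using
      lintegral_rpow_enorm_lt_top_of_eLpNorm_lt_top (by simp [hpq.pos]) ENNReal.ofReal_ne_top
        hg.eLpNorm_lt_top
  exact ⟨(hg.1.mono_ac hac).comp_aemeasurable hγ,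
    lintegral_comp_lt_top_of_map_eq_withDensity hγ hh hmap hpq hg.1.enorm hgp hhq⟩

end PullbackIntegrable

theorem exists_isClopen_isCompact_mem {X : Type*} [TopologicalSpace X] [LocallyCompactSpace X]
    [T2Space X] [TotallyDisconnectedSpace X] (x : X) : ∃ V, IsClopen V ∧ IsCompact V ∧ x ∈ V := by
  obtain ⟨K, hK, hxK⟩ := exists_compact_mem_nhds x
  obtain ⟨V, hV, hxV, hVK⟩ := loc_compact_Haus_tot_disc_of_zero_dim.mem_nhds_iff.1 hxK
  exact ⟨V, hV, hK.of_isClosed_subset hV.isClosed hVK, hxV⟩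

theorem withDensity_ofReal_indicator_one {α : Type*} [MeasurableSpace α] (μ : Measure α)
    {s : Set α} (hs : MeasurableSet s) :
    μ.withDensity (fun x => ENNReal.ofReal (s.indicator 1 x)) = μ.restrict s := by
  rw [← withDensity_indicator_one hs]
  congr 1 with x
  by_cases hx : x ∈ s <;> simp [hx]

theorem stmt14_general {Z1 Z2 : Type*}
    [TopologicalSpace Z1] [LocallyCompactSpace Z1] [T2Space Z1] [TotallyDisconnectedSpace Z1]
    [MeasurableSpace Z1] [BorelSpace Z1]
    [TopologicalSpace Z2]
    [MeasurableSpace Z2] [BorelSpace Z2]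
    (μ₁ : Measure Z1) (μ₂ : Measure Z2)
    (γ : Z1 → Z2) (hγ : Continuous γ)
    -- For every nonnegative smooth (= locally constant) compactly supported f, the pushforward
    -- γ_*(f μ₁) is absolutely continuous with respect to μ₂, with density in L^p for all p < ∞:
    (hpush : ∀ f : Z1 → ℝ, IsLocallyConstant f → HasCompactSupport f → 0 ≤ f →
      ∃ h : Z2 → ℝ≥0∞, Measurable h ∧
        Measure.map γ (μ₁.withDensity (fun x => ENNReal.ofReal (f x))) = μ₂.withDensity h ∧
        ∀ p : ℝ, 1 ≤ p → ∫⁻ y, h y ^ p ∂μ₂ < ⊤) :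
    ∀ ε : ℝ, 0 < ε → ∀ g : Z2 → ℝ, 0 ≤ g →
      MemLp g (ENNReal.ofReal (1 + ε)) μ₂ → LocallyIntegrable (g ∘ γ) μ₁ := by
  intro ε hε g _ hg x
  obtain ⟨V, hVclopen, hVcompact, hxV⟩ := exists_isClopen_isCompact_mem x
  obtain ⟨h, hh, hmap, hhLp⟩ := hpush (V.indicator 1)
    (LocallyConstant.indicator 1 hVclopen).isLocallyConstant
    (HasCompactSupport.intro hVcompact fun _ hy => indicator_of_notMem hy _)
    (indicator_nonneg fun _ _ => zero_le_one)
  rw [withDensity_ofReal_indicator_one μ₁ hVclopen.isOpen.measurableSet] at hmap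
  have hpq := Real.HolderConjugate.conjExponent (p := 1 + ε) (by linarith)
  exact ⟨V, hVclopen.isOpen.mem_nhds hxV, integrable_comp_of_map_eq_withDensity
    hγ.measurable.aemeasurable hh.aemeasurable hmap hpq hg (hhLp _ hpq.symm.lt.le)⟩

theorem stmt14 {Z1 Z2 : Type*}
    [TopologicalSpace Z1] [LocallyCompactSpace Z1] [T2Space Z1] [TotallyDisconnectedSpace Z1]
    [MeasurableSpace Z1] [BorelSpace Z1]
    [TopologicalSpace Z2] [LocallyCompactSpace Z2] [T2Space Z2] [TotallyDisconnectedSpace Z2]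
    [MeasurableSpace Z2] [BorelSpace Z2]
    (μ₁ : Measure Z1) (μ₂ : Measure Z2) [μ₁.Regular] [μ₂.Regular]
    (hμ₁pos : ∀ U : Set Z1, IsOpen U → U.Nonempty → 0 < μ₁ U)
    (hμ₁fin : ∀ K : Set Z1, IsCompact K → μ₁ K < ⊤)
    (hμ₂pos : ∀ U : Set Z2, IsOpen U → U.Nonempty → 0 < μ₂ U)
    (hμ₂fin : ∀ K : Set Z2, IsCompact K → μ₂ K < ⊤)
    (γ : Z1 → Z2) (hγ : Continuous γ)
    -- For every nonnegative smooth (= locally constant) compactly supported f, the pushforward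
    -- γ_*(f μ₁) is absolutely continuous with respect to μ₂, with density in L^p for all p < ∞:
    (hpush : ∀ f : Z1 → ℝ, IsLocallyConstant f → HasCompactSupport f → 0 ≤ f →
      ∃ h : Z2 → ℝ≥0∞, Measurable h ∧
        Measure.map γ (μ₁.withDensity (fun x => ENNReal.ofReal (f x))) = μ₂.withDensity h ∧
        ∀ p : ℝ, 1 ≤ p → ∫⁻ y, h y ^ p ∂μ₂ < ⊤) :
    ∀ ε : ℝ, 0 < ε → ∀ g : Z2 → ℝ, 0 ≤ g →
      MemLp g (ENNReal.ofReal (1 + ε)) μ₂ → LocallyIntegrable (g ∘ γ) μ₁ :=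
  stmt14_general μ₁ μ₂ γ hγ hpush
end
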